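/- arXiv:1807.11183 — 2 statements merged into one kernel-verified Lean document; each statement's English description precedes it below -/
import Mathlib

section
/- Let n ≥ 1 and let S = (a_1, a_2, ..., a_n) be an n-tuple of integers with 1 ≤ a_1 ≤ a_2 ≤ ... ≤ a_n ≤ 2^(n-1) and Σ_{i=1}^n a_i = 2^n − 1. Then S is the signature of a spanning tree of the n-cube Q_n if and only if Σ_{j=1}^k a_j ≥ 2^k − 1 for all k with 1 ≤ k ≤ n. -/
open SimpleGraph

/-- The `n`-cube: vertices are the subsets of `[n]` (modelled as `Finset (Fin n)`),
with an edge between `X` and `Y` iff their symmetric difference is a singleton. -/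
def cube (n : ℕ) : SimpleGraph (Finset (Fin n)) where
  Adj X Y := (symmDiff X Y).card = 1
  symm := by
    constructor
    intro X Y h
    rwa [symmDiff_comm]
  loopless := by
    constructor
    intro X h
    simp [symmDiff_self, Finset.bot_eq_empty] at h

/-- `T` is a spanning tree of `G` (both graphs on the same vertex set). -/
def IsSpanningTreeOf {V : Type*} (T G : SimpleGraph V) : Prop :=
  T ≤ G ∧ T.IsTree

/-- The edge `e` of the `n`-cube is in direction `i`. -/
def edgeInDir {n : ℕ} (i : Fin n) (e : Sym2 (Finset (Fin n))) : Prop :=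
  ∃ X : Finset (Fin n), e = s(X, symmDiff X {i})

/-- The number of edges of `T` in direction `i`. -/
noncomputable def dirCount {n : ℕ} (T : SimpleGraph (Finset (Fin n))) (i : Fin n) : ℕ :=
  {e | e ∈ T.edgeSet ∧ edgeInDir i e}.ncard

/-- `a` is the signature of the tree `T`. -/
def HasSig {n : ℕ} (T : SimpleGraph (Finset (Fin n))) (a : Fin n → ℕ) : Prop :=
  ∀ i, dirCount T i = a i

/-- `a` is a signature of `Q_n`, i.e. the signature of some spanning tree of the `n`-cube. -/
def IsSignature (n : ℕ) (a : Fin n → ℕ) : Prop :=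
  ∃ T, IsSpanningTreeOf T (cube n) ∧ HasSig T a

/-- A section of the set of nonempty subsets of `[n]`. -/
def IsSection {n : ℕ} (ψ : Finset (Fin n) → Fin n) : Prop :=
  ∀ X : Finset (Fin n), X.Nonempty → ψ X ∈ X

/-- The number of nonempty subsets on which the section `ψ` takes the value `i`. -/
noncomputable def secCount {n : ℕ} (ψ : Finset (Fin n) → Fin n) (i : Fin n) : ℕ :=
  {X : Finset (Fin n) | X.Nonempty ∧ ψ X = i}.ncard

/-- The tuple `a` reduces over `R` : `Σ_{i ∈ R} a i = 2^|R| - 1`. -/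
def ReducesOver {n : ℕ} (a : Fin n → ℕ) (R : Finset (Fin n)) : Prop :=
  ∑ i ∈ R, a i = 2 ^ R.card - 1

/-- `a` is reducible: it reduces over some proper nonempty subset of `[n]`. -/
def IsReducibleSig {n : ℕ} (a : Fin n → ℕ) : Prop :=
  ∃ R : Finset (Fin n), R.Nonempty ∧ R ≠ Finset.univ ∧ ReducesOver a R

/-- `a` is irreducible. -/
def IsIrreducibleSig {n : ℕ} (a : Fin n → ℕ) : Prop := ¬ IsReducibleSig a

/-- `T` is upright: every vertex `X` is at distance `|X|` in `T` from the root `∅`. -/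
def IsUpright {n : ℕ} (T : SimpleGraph (Finset (Fin n))) : Prop :=
  ∀ X : Finset (Fin n), T.dist X ∅ = X.card

/-- `ψ` is the section associated to the upright tree `T`: for each nonempty `X`,
`ψ X ∈ X` and `X - {ψ X}` is the next vertex after `X` on the path in `T` from `X` to `∅`. -/
def IsTreeSection {n : ℕ} (T : SimpleGraph (Finset (Fin n))) (ψ : Finset (Fin n) → Fin n) : Prop :=
  ∀ X : Finset (Fin n), X.Nonempty → ψ X ∈ X ∧ T.Adj X (X.erase (ψ X))

/-- The minimum of `Σ_{i ∈ K} a i` over the sets `K` of `k` directions. -/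
noncomputable def minSum {n : ℕ} (a : Fin n → ℕ) (k : ℕ) : ℕ :=
  sInf {m : ℕ | ∃ K : Finset (Fin n), K.card = k ∧ ∑ i ∈ K, a i = m}

/-- The excess of `a` at `k`. -/
noncomputable def excess {n : ℕ} (a : Fin n → ℕ) (k : ℕ) : ℤ :=
  (minSum a k : ℤ) - (2 ^ k - 1)

/-- The result of sliding the edge `e` in direction `i`. -/
def slideEdge {n : ℕ} (i : Fin n) (e : Sym2 (Finset (Fin n))) : Sym2 (Finset (Fin n)) :=
  Sym2.map (fun X => symmDiff X {i}) e

/-- The edge `e` of the spanning tree `T` of `Q_n` is `i`-slidable. -/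
def Slidable (n : ℕ) (T : SimpleGraph (Finset (Fin n))) (i : Fin n)
    (e : Sym2 (Finset (Fin n))) : Prop :=
  e ∈ T.edgeSet ∧
    IsSpanningTreeOf (SimpleGraph.fromEdgeSet ((T.edgeSet \ {e}) ∪ {slideEdge i e})) (cube n)

/-- The edge set `E` is (the edge set of) a spanning tree of the subgraph of the
`n`-cube induced on the vertex set `s`. -/
def IsSpanningTreeOn (n : ℕ) (s : Set (Finset (Fin n))) (E : Set (Sym2 (Finset (Fin n)))) : Prop :=
  E ⊆ (cube n).edgeSet ∧ (∀ e ∈ E, ∀ v ∈ e, v ∈ s) ∧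
    ((SimpleGraph.fromEdgeSet E).induce s).IsTree

/-- The edges of `T` with both endpoints in `s`. -/
def edgesWithin {n : ℕ} (s : Set (Finset (Fin n))) (T : SimpleGraph (Finset (Fin n))) :
    Set (Sym2 (Finset (Fin n))) :=
  {e | e ∈ T.edgeSet ∧ ∀ v ∈ e, v ∈ s}

/-- The edge `e` of the tree with edge set `E`, spanning the subgraph of the `n`-cube
induced on `s`, is `i`-slidable. -/
def SlidableOn (n : ℕ) (s : Set (Finset (Fin n))) (E : Set (Sym2 (Finset (Fin n))))
    (i : Fin n) (e : Sym2 (Finset (Fin n))) : Prop :=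
  e ∈ E ∧ IsSpanningTreeOn n s ((E \ {e}) ∪ {slideEdge i e})

/-- The number of edges of `T` in direction `i` with both endpoints in `s`. -/
noncomputable def dirCountOn {n : ℕ} (s : Set (Finset (Fin n)))
    (T : SimpleGraph (Finset (Fin n))) (i : Fin n) : ℕ :=
  {e | e ∈ T.edgeSet ∧ edgeInDir i e ∧ ∀ v ∈ e, v ∈ s}.ncard

/-- `T'` is a spanning tree of the `n`-cube obtained from the spanning tree `T` by a
single edge slide. -/
def SlideStep (n : ℕ) (T T' : SimpleGraph (Finset (Fin n))) : Prop :=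
  IsSpanningTreeOf T (cube n) ∧ IsSpanningTreeOf T' (cube n) ∧
    ∃ (i : Fin n) (e : Sym2 (Finset (Fin n))), e ∈ T.edgeSet ∧
      T' = SimpleGraph.fromEdgeSet ((T.edgeSet \ {e}) ∪ {slideEdge i e})

/-- The trees `T` and `T'` are related by a single edge slide. -/
def SlideAdj (n : ℕ) (T T' : SimpleGraph (Finset (Fin n))) : Prop :=
  T ≠ T' ∧ ∃ (i : Fin n) (e : Sym2 (Finset (Fin n))),
    (e ∈ T.edgeSet ∧ T' = SimpleGraph.fromEdgeSet ((T.edgeSet \ {e}) ∪ {slideEdge i e})) ∨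
    (e ∈ T'.edgeSet ∧ T = SimpleGraph.fromEdgeSet ((T'.edgeSet \ {e}) ∪ {slideEdge i e}))

/-- The spanning trees of the `n`-cube. -/
def SpanningTrees (n : ℕ) := {T : SimpleGraph (Finset (Fin n)) // IsSpanningTreeOf T (cube n)}

/-- The edge slide graph `E(n)` of the `n`-cube. -/
def eslide (n : ℕ) : SimpleGraph (SpanningTrees n) where
  Adj T T' := SlideAdj n T.1 T'.1
  symm := by
    constructor
    rintro T T' ⟨hne, i, e, h⟩
    exact ⟨hne.symm, i, e, h.symm⟩
  loopless := by
    constructor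
    rintro T ⟨hne, -⟩
    exact hne rfl

/-- The projection `π_R(T)` of `T` to `Q_R`: a graph on the subsets of `R`, with `A`
adjacent to `B` iff some edge of `T` projects to `{A, B}`. -/
def projTree (n : ℕ) (R : Finset (Fin n)) (T : SimpleGraph (Finset (Fin n))) :
    SimpleGraph ↥{W : Finset (Fin n) | W ⊆ R} where
  Adj A B := A.1 ≠ B.1 ∧ ∃ U V : Finset (Fin n), T.Adj U V ∧ U ∩ R = A.1 ∧ V ∩ R = B.1
  symm := by
    constructor
    rintro A B ⟨hne, U, V, hUV, hU, hV⟩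
    exact ⟨hne.symm, V, U, hUV.symm, hV, hU⟩
  loopless := by
    constructor
    rintro A ⟨hne, -⟩
    exact hne rfl

/-- The projected edge set `π_R(T)`: images under `π_R` of the edges of `T` in
directions belonging to `R`. -/
def projEdges {n : ℕ} (R : Finset (Fin n)) (T : SimpleGraph (Finset (Fin n))) :
    Set (Sym2 (Finset (Fin n))) :=
  {f | ∃ e ∈ T.edgeSet, (∃ i ∈ R, edgeInDir i e) ∧ f = Sym2.map (· ∩ R) e}

/-- The decomposition `T ↦ (F_T, (T(R,X))_{X ⊆ R})` of a tree reducing over `R`. -/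
def decompose (n : ℕ) (R : Finset (Fin n)) (T : SimpleGraph (Finset (Fin n))) :
    Set (Sym2 (Finset (Fin n))) ×
      ((X : Finset (Fin n)) → X ⊆ R → SimpleGraph ↥{W : Finset (Fin n) | W ∩ R = X}) :=
  ⟨{e | e ∈ T.edgeSet ∧ ∃ i ∈ R, edgeInDir i e},
   fun X _ => T.induce {W : Finset (Fin n) | W ∩ R = X}⟩

/-- `s` is the least index such that `ε_k(a) = 0` for all `s ≤ k ≤ n`; i.e. the
entries of (an ordered) `a` with index `≤ s` form the unsaturated part of `a`. -/
def UnsatIndex (n : ℕ) (a : Fin n → ℕ) (s : ℕ) : Prop :=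
  (∀ k, s ≤ k → k ≤ n → excess a k = 0) ∧
    ∀ s' < s, ¬ (∀ k, s' ≤ k → k ≤ n → excess a k = 0)

/-- The restriction of `a` to its first `s` entries is reducible (as a tuple of length `s`). -/
def ReducibleBelow {n : ℕ} (a : Fin n → ℕ) (s : ℕ) : Prop :=
  ∃ R : Finset (Fin n), R.Nonempty ∧ (∀ i ∈ R, (i : ℕ) < s) ∧ R.card < s ∧
    ∑ i ∈ R, a i = 2 ^ R.card - 1

/-- `a` is strictly reducible: it is reducible and its unsaturated part is reducible. -/
def StrictlyReducible (n : ℕ) (a : Fin n → ℕ) : Prop :=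
  IsReducibleSig a ∧
    ∃ (σ : Equiv.Perm (Fin n)) (s : ℕ), Monotone (a ∘ σ) ∧
      UnsatIndex n (a ∘ σ) s ∧ ReducibleBelow (a ∘ σ) s

/-!
Necessity: projecting a spanning tree `T` of `Q_n` onto the subcube `Q_K` spanned by a set `K`
of directions gives a connected graph on `2^|K|` vertices, each of whose edges is the image of an
edge of `T` in a direction from `K`; so `T` has at least `2^|K| - 1` such edges.

Sufficiency: for monotone `a` the prefix inequalities give `Σ_{i ∈ K} a_i ≥ 2^|K| - 1` for
every `K`, which is Hall's condition for choosing an element `ψ X ∈ X` of every nonempty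
`X ⊆ [n]` so that each `i` is chosen at most `a_i` times, hence exactly `a_i` times since both
totals are `2^n - 1`. Joining every nonempty `X` to `X \ {ψ X}` gives a connected graph with
`2^n - 1` edges, i.e. a spanning tree, and its signature is `a`.
-/

open Finset

section Cube

variable {n : ℕ}

lemma edgeInDir_mk_iff {i : Fin n} {X Y : Finset (Fin n)} :
    edgeInDir i s(X, Y) ↔ symmDiff X Y = {i} := by
  constructor
  · rintro ⟨Z, hZ⟩
    rcases Sym2.eq_iff.mp hZ with ⟨rfl, rfl⟩ | ⟨rfl, rfl⟩
    · exact symmDiff_symmDiff_cancel_left X {i}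
    · exact symmDiff_symmDiff_self' Y {i}
  · intro h
    refine ⟨X, ?_⟩
    rw [← h, symmDiff_symmDiff_cancel_left]

lemma cube_adj_iff_exists_edgeInDir {X Y : Finset (Fin n)} :
    (cube n).Adj X Y ↔ ∃ i, edgeInDir i s(X, Y) := by
  simp only [edgeInDir_mk_iff]
  exact Finset.card_eq_one

lemma symmDiff_erase_self {α : Type*} [DecidableEq α] {X : Finset α} {i : α} (h : i ∈ X) :
    symmDiff X (X.erase i) = {i} := by
  rw [symmDiff_of_ge (Finset.erase_subset i X), Finset.sdiff_erase_self h]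

lemma edgeInDir_erase_iff {i j : Fin n} {X : Finset (Fin n)} (hj : j ∈ X) :
    edgeInDir i s(X, X.erase j) ↔ j = i := by
  rw [edgeInDir_mk_iff, symmDiff_erase_self hj, Finset.singleton_inj]

end Cube

section Projection

variable {n : ℕ} (K : Finset (Fin n)) {T : SimpleGraph (Finset (Fin n))}

lemma projTree_reachable {U V : Finset (Fin n)} (p : T.Walk U V) :
    (projTree n K T).Reachable
      ⟨U ∩ K, inter_subset_right⟩ ⟨V ∩ K, inter_subset_right⟩ := by
  induction p with
  | nil => rfl
  | @cons A B C h _ ih =>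
    by_cases hAB : A ∩ K = B ∩ K
    · simpa only [hAB] using ih
    · have hadj : (projTree n K T).Adj
          ⟨A ∩ K, inter_subset_right⟩ ⟨B ∩ K, inter_subset_right⟩ :=
        ⟨hAB, A, B, h, rfl, rfl⟩
      exact hadj.reachable.trans ih

lemma projTree_connected (hT : T.Connected) : (projTree n K T).Connected := by
  refine (SimpleGraph.connected_iff _).mpr
    ⟨fun ⟨A, hA⟩ ⟨B, hB⟩ => ?_, ⟨⟨∅, empty_subset K⟩⟩⟩
  obtain ⟨p⟩ := hT A B
  have hA' : A ∩ K = A := inter_eq_left.mpr hA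
  have hB' : B ∩ K = B := inter_eq_left.mpr hB
  simpa only [hA', hB'] using projTree_reachable K p

lemma nat_card_projTree_verts : Nat.card ↥{W : Finset (Fin n) | W ⊆ K} = 2 ^ K.card := by
  rw [Nat.card_coe_set_eq, ← card_powerset, ← Set.ncard_coe_finset, coe_powerset]
  rfl

lemma image_projTree_edgeSet_subset (hle : T ≤ cube n) :
    Sym2.map Subtype.val '' (projTree n K T).edgeSet ⊆
      Sym2.map (· ∩ K) '' ⋃ i ∈ K, {e | e ∈ T.edgeSet ∧ edgeInDir i e} := by
  rintro _ ⟨e, he, rfl⟩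
  induction e using Sym2.ind with
  | _ A B =>
    obtain ⟨hAB, U, V, hUV, hU, hV⟩ : (projTree n K T).Adj A B := he
    obtain ⟨d, hd⟩ := cube_adj_iff_exists_edgeInDir.mp (hle hUV)
    have hdK : d ∈ K := by
      by_contra hdK
      have : symmDiff (U ∩ K) (V ∩ K) = ∅ := by
        rw [← inf_eq_inter, ← inf_eq_inter, ← inf_symmDiff_distrib_right,
          edgeInDir_mk_iff.mp hd]
        exact singleton_inter_of_notMem hdK
      exact hAB (by rw [← hU, ← hV]; exact symmDiff_eq_bot.mp this)
    refine ⟨s(U, V), Set.mem_biUnion hdK ⟨hUV, hd⟩, ?_⟩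
    simp only [Sym2.map_mk, hU, hV]

theorem two_pow_card_sub_one_le_sum_dirCount (hle : T ≤ cube n) (hT : T.Connected) :
    2 ^ K.card - 1 ≤ ∑ i ∈ K, dirCount T i := by
  have hverts := (projTree_connected K hT).card_vert_le_card_edgeSet_add_one
  rw [nat_card_projTree_verts, Nat.card_coe_set_eq] at hverts
  have hedges : (projTree n K T).edgeSet.ncard ≤ ∑ i ∈ K, dirCount T i :=
    calc (projTree n K T).edgeSet.ncard
        = (Sym2.map Subtype.val '' (projTree n K T).edgeSet).ncard :=
          (Set.ncard_image_of_injective _ (Sym2.map.injective Subtype.val_injective)).symm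
      _ ≤ (Sym2.map (· ∩ K) '' ⋃ i ∈ K, {e | e ∈ T.edgeSet ∧ edgeInDir i e}).ncard :=
          Set.ncard_le_ncard (image_projTree_edgeSet_subset K hle) (Set.toFinite _)
      _ ≤ (⋃ i ∈ K, {e | e ∈ T.edgeSet ∧ edgeInDir i e}).ncard :=
          Set.ncard_image_le (Set.toFinite _)
      _ ≤ ∑ i ∈ K, dirCount T i := K.set_ncard_biUnion_le _
  omega

end Projection

section PrefixSums

lemma Fin.val_le_of_strictMono {k n : ℕ} {f : Fin k → Fin n} (hf : StrictMono f) (j : Fin k) :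
    (j : ℕ) ≤ f j := by
  have := card_le_card_of_injOn f (s := Iic j) (t := Iic (f j))
    (fun x hx => by simpa using hf.monotone (by simpa using hx)) hf.injective.injOn
  simpa using this

lemma filter_val_lt_eq_map_castLEEmb {n k : ℕ} (hkn : k ≤ n) :
    univ.filter (fun i : Fin n => (i : ℕ) < k) = univ.map (Fin.castLEEmb hkn) := by
  ext i
  simpa using ⟨fun hi => ⟨⟨i, hi⟩, rfl⟩, fun ⟨j, hj⟩ => hj ▸ j.2⟩

lemma sum_filter_val_lt_le_sum_of_monotone {M : Type*} [AddCommMonoid M] [PartialOrder M]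
    [IsOrderedAddMonoid M] {n k : ℕ} {a : Fin n → M} (hmono : Monotone a) {K : Finset (Fin n)}
    (hK : K.card = k) :
    ∑ i ∈ univ.filter (fun i : Fin n => (i : ℕ) < k), a i ≤ ∑ i ∈ K, a i := by
  have hkn : k ≤ n := hK ▸ card_le_univ K |>.trans_eq (Fintype.card_fin n)
  set f := K.orderEmbOfFin hK
  calc ∑ i ∈ univ.filter (fun i : Fin n => (i : ℕ) < k), a i
      = ∑ j : Fin k, a (Fin.castLE hkn j) := by
        rw [filter_val_lt_eq_map_castLEEmb hkn, sum_map]; rfl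
    _ ≤ ∑ j, a (f j) :=
        sum_le_sum fun j _ => hmono (Fin.le_def.mpr (Fin.val_le_of_strictMono f.strictMono j))
    _ = ∑ i ∈ K, a i := by
        rw [← map_orderEmbOfFin_univ K hK, sum_map]; rfl

end PrefixSums

section ChoiceFunction

variable {α : Type*} [DecidableEq α]

lemma card_le_two_pow_card_biUnion_sub_one (s : Finset {X : Finset α // X.Nonempty}) :
    #s ≤ 2 ^ #(s.biUnion Subtype.val) - 1 := by
  rw [← card_powerset, ← card_erase_of_mem (empty_mem_powerset _)]
  refine card_le_card_of_injOn Subtype.val (fun X hX => ?_) Subtype.val_injective.injOn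
  rw [mem_coe, mem_erase, mem_powerset]
  exact ⟨X.2.ne_empty, subset_biUnion_of_mem Subtype.val hX⟩

variable [Fintype α]

lemma card_subtype_finset_nonempty :
    Fintype.card {X : Finset α // X.Nonempty} = 2 ^ Fintype.card α - 1 := by
  rw [Fintype.card_subtype, ← Fintype.card_finset, ← card_univ,
    ← card_erase_of_mem (mem_univ ∅)]
  congr 1
  ext X
  simp [nonempty_iff_ne_empty]

theorem exists_choice_card_fiber_eq (a : α → ℕ)
    (hK : ∀ K : Finset α, 2 ^ #K - 1 ≤ ∑ i ∈ K, a i)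
    (hsum : ∑ i, a i = 2 ^ Fintype.card α - 1) :
    ∃ ψ : {X : Finset α // X.Nonempty} → α,
      (∀ X, ψ X ∈ X.1) ∧ ∀ i, #{X | ψ X = i} = a i := by
  let slots (X : {X : Finset α // X.Nonempty}) : Finset (Σ _ : α, ℕ) :=
    X.1.sigma fun i => range (a i)
  have hall (s : Finset {X : Finset α // X.Nonempty}) : #s ≤ #(s.biUnion slots) :=
    calc #s ≤ 2 ^ #(s.biUnion Subtype.val) - 1 := card_le_two_pow_card_biUnion_sub_one s
      _ ≤ ∑ i ∈ s.biUnion Subtype.val, a i := hK _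
      _ = #((s.biUnion Subtype.val).sigma fun i => range (a i)) := by simp
      _ ≤ #(s.biUnion slots) := card_le_card fun p hp => by
          obtain ⟨hp₁, hp₂⟩ := mem_sigma.mp hp
          obtain ⟨X, hX, hpX⟩ := mem_biUnion.mp hp₁
          exact mem_biUnion.mpr ⟨X, hX, mem_sigma.mpr ⟨hpX, hp₂⟩⟩
  obtain ⟨f, hinj, hf⟩ := (all_card_le_biUnion_card_iff_exists_injective slots).mp hall
  simp only [slots, mem_sigma, mem_range] at hf
  refine ⟨fun X => (f X).1, fun X => (hf X).1, ?_⟩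
  have hle (i : α) : #{X | (f X).1 = i} ≤ a i := by
    refine (card_le_card_of_injOn (fun X => (f X).2) (t := range (a i)) ?_ ?_).trans_eq
      (card_range _)
    · intro X hX
      simpa [← (mem_filter_univ X).mp hX] using (hf X).2
    · intro X hX Y hY hXY
      have hfst : (f X).1 = (f Y).1 :=
        ((mem_filter_univ X).mp hX).trans ((mem_filter_univ Y).mp hY).symm
      exact hinj (Sigma.ext hfst (heq_of_eq hXY))
  have htotal : ∑ i, #{X | (f X).1 = i} = ∑ i, a i := by
    rw [card_eq_sum_card_fiberwise (fun X _ => mem_univ ((f X).1)) |>.symm, card_univ,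
      card_subtype_finset_nonempty, hsum]
  exact fun i => (sum_eq_sum_iff_of_le fun i _ => hle i).mp htotal i (mem_univ i)

end ChoiceFunction

section ChoiceTree

variable {α : Type*} [DecidableEq α] {ψ : {X : Finset α // X.Nonempty} → α}

def choiceEdge (ψ : {X : Finset α // X.Nonempty} → α) (X : {X : Finset α // X.Nonempty}) :
    Sym2 (Finset α) :=
  s(X.1, X.1.erase (ψ X))

def choiceTree (ψ : {X : Finset α // X.Nonempty} → α) : SimpleGraph (Finset α) :=
  SimpleGraph.fromEdgeSet (Set.range (choiceEdge ψ))

lemma choiceTree_edgeSet (hψ : ∀ X, ψ X ∈ X.1) :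
    (choiceTree ψ).edgeSet = Set.range (choiceEdge ψ) := by
  rw [choiceTree, SimpleGraph.edgeSet_fromEdgeSet, sdiff_eq_left, Set.disjoint_left]
  rintro _ ⟨X, rfl⟩
  exact (erase_ssubset (hψ X)).ne'

lemma choiceTree_adj_erase (hψ : ∀ X, ψ X ∈ X.1) (X : {X : Finset α // X.Nonempty}) :
    (choiceTree ψ).Adj X.1 (X.1.erase (ψ X)) := by
  rw [← SimpleGraph.mem_edgeSet, choiceTree_edgeSet hψ]
  exact ⟨X, rfl⟩

lemma choiceEdge_injective (hψ : ∀ X, ψ X ∈ X.1) :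
    Function.Injective (choiceEdge ψ) := by
  intro X Y h
  rcases Sym2.eq_iff.mp h with ⟨h, -⟩ | ⟨hX, hY⟩
  · exact Subtype.ext h
  · have : Y.1 ⊂ Y.1 :=
      calc Y.1 = X.1.erase (ψ X) := hY.symm
        _ ⊂ X.1 := erase_ssubset (hψ X)
        _ = Y.1.erase (ψ Y) := hX
        _ ⊂ Y.1 := erase_ssubset (hψ Y)
    exact (lt_irrefl _ this).elim

lemma choiceTree_reachable_empty (hψ : ∀ X, ψ X ∈ X.1) (X : Finset α) :
    (choiceTree ψ).Reachable X ∅ := by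
  induction X using Finset.strongInduction with
  | H X ih =>
    rcases X.eq_empty_or_nonempty with rfl | hX
    · rfl
    · exact (choiceTree_adj_erase hψ ⟨X, hX⟩).reachable.trans
        (ih _ (erase_ssubset (hψ ⟨X, hX⟩)))

theorem choiceTree_isTree [Fintype α] (hψ : ∀ X, ψ X ∈ X.1) : (choiceTree ψ).IsTree := by
  have hconn : (choiceTree ψ).Connected :=
    (SimpleGraph.connected_iff _).mpr ⟨fun X Y => (choiceTree_reachable_empty hψ X).trans
      (choiceTree_reachable_empty hψ Y).symm, ⟨∅⟩⟩
  refine SimpleGraph.isTree_iff_connected_and_card.mpr ⟨hconn, ?_⟩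
  rw [choiceTree_edgeSet hψ, Nat.card_range_of_injective (choiceEdge_injective hψ),
    Nat.card_eq_fintype_card, card_subtype_finset_nonempty, Nat.card_eq_fintype_card,
    Fintype.card_finset, Nat.sub_add_cancel Nat.one_le_two_pow]

lemma choiceTree_le_cube {n : ℕ} {ψ : {X : Finset (Fin n) // X.Nonempty} → Fin n}
    (hψ : ∀ X, ψ X ∈ X.1) : choiceTree ψ ≤ cube n := by
  intro X Y h
  rw [← SimpleGraph.mem_edgeSet, choiceTree_edgeSet hψ] at h
  obtain ⟨Z, hZ⟩ := h
  rw [← SimpleGraph.mem_edgeSet, ← hZ]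
  exact cube_adj_iff_exists_edgeInDir.mpr ⟨ψ Z, (edgeInDir_erase_iff (hψ Z)).mpr rfl⟩

lemma dirCount_choiceTree {n : ℕ} {ψ : {X : Finset (Fin n) // X.Nonempty} → Fin n}
    (hψ : ∀ X, ψ X ∈ X.1) (i : Fin n) : dirCount (choiceTree ψ) i = #{X | ψ X = i} := by
  have : {e | e ∈ (choiceTree ψ).edgeSet ∧ edgeInDir i e} =
      choiceEdge ψ '' ↑(univ.filter fun X => ψ X = i) := by
    ext e
    simp only [choiceTree_edgeSet hψ, coe_filter, mem_univ, true_and,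
      Set.mem_image, Set.mem_range]
    constructor
    · rintro ⟨⟨X, rfl⟩, h⟩
      exact ⟨X, (edgeInDir_erase_iff (hψ X)).mp h, rfl⟩
    · rintro ⟨X, h, rfl⟩
      exact ⟨⟨X, rfl⟩, (edgeInDir_erase_iff (hψ X)).mpr h⟩
  rw [dirCount, this, Set.ncard_image_of_injective _ (choiceEdge_injective hψ),
    Set.ncard_coe_finset]

end ChoiceTree

theorem stmt0_general (n : ℕ) (a : Fin n → ℕ) (hmono : Monotone a)
    (hsum : ∑ i, a i = 2 ^ n - 1) :
    IsSignature n a ↔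
      ∀ k, 1 ≤ k → k ≤ n →
        2 ^ k - 1 ≤ ∑ i ∈ Finset.univ.filter (fun i : Fin n => (i : ℕ) < k), a i := by
  constructor
  · rintro ⟨T, ⟨hle, hT⟩, hsig⟩ k - hkn
    set P := univ.filter fun i : Fin n => (i : ℕ) < k
    have hcard : #P = k := by simpa [hkn] using Fin.card_filter_val_lt (n := n) (m := k)
    simpa [hcard, hsig _] using two_pow_card_sub_one_le_sum_dirCount P hle hT.connected
  · intro h
    have hK (K : Finset (Fin n)) : 2 ^ #K - 1 ≤ ∑ i ∈ K, a i := by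
      rcases Nat.eq_zero_or_pos #K with hK | hK
      · simp [hK]
      · exact (h _ hK (card_le_univ K |>.trans_eq (Fintype.card_fin n))).trans
          (sum_filter_val_lt_le_sum_of_monotone hmono rfl)
    obtain ⟨ψ, hψ, hfiber⟩ := exists_choice_card_fiber_eq a hK (by rwa [Fintype.card_fin])
    exact ⟨choiceTree ψ, ⟨choiceTree_le_cube hψ, choiceTree_isTree hψ⟩,
      fun i => (dirCount_choiceTree hψ i).trans (hfiber i)⟩

/-- Theorem: characterisation of signatures.
An ordered `n`-tuple with entries in `[1, 2^{n-1}]` summing to `2^n - 1` is a signature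
of `Q_n` iff all its partial sums satisfy `Σ_{j=1}^k a_j ≥ 2^k - 1`. -/
theorem stmt0 (n : ℕ) (hn : 1 ≤ n) (a : Fin n → ℕ)
    (hpos : ∀ i, 1 ≤ a i) (hmono : Monotone a) (hub : ∀ i, a i ≤ 2 ^ (n - 1))
    (hsum : ∑ i, a i = 2 ^ n - 1) :
    IsSignature n a ↔
      ∀ k, 1 ≤ k → k ≤ n →
        2 ^ k - 1 ≤ ∑ i ∈ Finset.univ.filter (fun i : Fin n => (i : ℕ) < k), a i :=
  stmt0_general n a hmono hsum
end

section
/- Let S = (a_1, ..., a_n) be an ordered signature of Q_n that is saturated above direction r, where r < n. Then the number of upright spanning trees of Q_n with signature S is equal to the number of upright spanning trees of Q_r with signature (a_1, ..., a_r). -/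
open SimpleGraph

/-!
An upright spanning tree `T` of `Q_n` is the same thing as a section `ψ` of the nonempty subsets:
the first step from `X` towards `∅` in `T` removes `ψ X ∈ X`, and the signature of `T` counts
how often `ψ` takes each value. If the ordered signature `a` is saturated above `r`, then
`a_1 + ⋯ + a_k = 2^k - 1` for every `k ≥ r`. The `2^k - 1` nonempty subsets of the first `k`
directions all take values among them, so no other set can; hence every set not contained in the
first `r` directions is sent to its largest element, and `a_i = 2^(i-1)` for `i > r`. Such
sections are therefore exactly the extensions, by the largest element, of the sections of `[r]`
with signature `(a_1, …, a_r)`.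
-/

section Cube

variable {n : ℕ} {X Y : Finset (Fin n)} {i : Fin n}

lemma cube_adj_iff :
    (cube n).Adj X Y ↔ ∃ i, (i ∈ X ∧ Y = X.erase i) ∨ (i ∈ Y ∧ X = Y.erase i) := by
  simp only [cube, Finset.card_eq_one, Finset.ext_iff, Finset.mem_symmDiff,
    Finset.mem_singleton, Finset.mem_erase]
  constructor
  · rintro ⟨i, hi⟩
    by_cases hiX : i ∈ X
    · exact ⟨i, Or.inl ⟨hiX, fun j => by grind⟩⟩
    · exact ⟨i, Or.inr ⟨by grind, fun j => by grind⟩⟩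
  · rintro ⟨i, ⟨hi, hY⟩ | ⟨hi, hX⟩⟩ <;> exact ⟨i, fun j => by grind⟩

lemma cube_adj_erase (hi : i ∈ X) : (cube n).Adj X (X.erase i) :=
  cube_adj_iff.mpr ⟨i, Or.inl ⟨hi, rfl⟩⟩

lemma card_le_card_add_one_of_cube_adj (h : (cube n).Adj X Y) : X.card ≤ Y.card + 1 := by
  rcases cube_adj_iff.mp h with ⟨i, ⟨hi, rfl⟩ | ⟨hi, rfl⟩⟩
  · rw [Finset.card_erase_add_one hi]
  · exact (Finset.card_erase_le).trans (Nat.le_succ _)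

lemma card_le_length_add_card {G : SimpleGraph (Finset (Fin n))} (hG : G ≤ cube n)
    (p : G.Walk X Y) : X.card ≤ p.length + Y.card := by
  induction p with
  | nil => simp
  | cons h _ ih =>
    have := card_le_card_add_one_of_cube_adj (hG h)
    rw [SimpleGraph.Walk.length_cons]
    omega

lemma edgeInDir_mk_erase_iff {j : Fin n} (hj : j ∈ X) :
    edgeInDir i s(X, X.erase j) ↔ i = j := by
  constructor
  · rintro ⟨W, hW⟩
    simp only [Sym2.eq_iff, Finset.ext_iff, Finset.mem_symmDiff, Finset.mem_singleton,
      Finset.mem_erase] at hW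
    grind
  · rintro rfl
    refine ⟨X, congrArg _ (Finset.ext fun j => ?_)⟩
    simp only [Finset.mem_symmDiff, Finset.mem_singleton, Finset.mem_erase]
    grind

end Cube

section SectionGraph

variable {n : ℕ} {ψ : Finset (Fin n) → Fin n}

def sectionGraph (ψ : Finset (Fin n) → Fin n) : SimpleGraph (Finset (Fin n)) :=
  SimpleGraph.fromEdgeSet ((fun X => s(X, X.erase (ψ X))) '' {X | X.Nonempty})

lemma sectionGraph_adj (hψ : IsSection ψ) {X Y : Finset (Fin n)} :
    (sectionGraph ψ).Adj X Y ↔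
      (X.Nonempty ∧ Y = X.erase (ψ X)) ∨ (Y.Nonempty ∧ X = Y.erase (ψ Y)) := by
  simp only [sectionGraph, fromEdgeSet_adj, Set.mem_image, Set.mem_ofPred_eq, Sym2.eq_iff]
  constructor
  · rintro ⟨⟨W, hW, ⟨rfl, rfl⟩ | ⟨rfl, rfl⟩⟩, -⟩
    exacts [Or.inl ⟨hW, rfl⟩, Or.inr ⟨hW, rfl⟩]
  · have hne : ∀ W : Finset (Fin n), W.Nonempty → W ≠ W.erase (ψ W) := fun W hW h =>
      Finset.notMem_erase (ψ W) W (h ▸ hψ W hW)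
    rintro (⟨hX, rfl⟩ | ⟨hY, rfl⟩)
    · exact ⟨⟨X, hX, Or.inl ⟨rfl, rfl⟩⟩, hne X hX⟩
    · exact ⟨⟨Y, hY, Or.inr ⟨rfl, rfl⟩⟩, (hne Y hY).symm⟩

lemma sectionGraph_adj_erase_iff (hψ : IsSection ψ) {X : Finset (Fin n)} {i : Fin n}
    (hi : i ∈ X) : (sectionGraph ψ).Adj X (X.erase i) ↔ i = ψ X := by
  have hX : X.Nonempty := ⟨i, hi⟩
  rw [sectionGraph_adj hψ]
  constructor
  · rintro (⟨-, h⟩ | ⟨hX', h⟩)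
    · exact (Finset.erase_inj X hi).mp h
    · have := congrArg Finset.card h
      rw [Finset.card_erase_of_mem (hψ _ hX'), Finset.card_erase_of_mem hi] at this
      have := hX.card_pos
      omega
  · rintro rfl
    exact Or.inl ⟨hX, rfl⟩

lemma sectionGraph_le_cube (hψ : IsSection ψ) : sectionGraph ψ ≤ cube n := by
  intro X Y h
  rcases (sectionGraph_adj hψ).mp h with ⟨hX, rfl⟩ | ⟨hY, rfl⟩
  · exact cube_adj_erase (hψ X hX)
  · exact (cube_adj_erase (hψ Y hY)).symm

lemma sectionGraph_exists_walk (hψ : IsSection ψ) (X : Finset (Fin n)) :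
    ∃ p : (sectionGraph ψ).Walk X ∅, p.length = X.card := by
  induction X using Finset.strongInduction with
  | H X ih =>
    rcases X.eq_empty_or_nonempty with rfl | hX
    · exact ⟨.nil, rfl⟩
    have hmem := hψ X hX
    obtain ⟨p, hp⟩ := ih _ (Finset.erase_ssubset hmem)
    have hadj : (sectionGraph ψ).Adj X (X.erase (ψ X)) :=
      (sectionGraph_adj_erase_iff hψ hmem).mpr rfl
    refine ⟨.cons hadj p, ?_⟩
    rw [SimpleGraph.Walk.length_cons, hp, Finset.card_erase_add_one hmem]

lemma sectionGraph_connected (hψ : IsSection ψ) : (sectionGraph ψ).Connected := by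
  have h : ∀ X, (sectionGraph ψ).Reachable X ∅ := fun X =>
    ⟨(sectionGraph_exists_walk hψ X).choose⟩
  exact (connected_iff _).mpr ⟨fun X Y => (h X).trans (h Y).symm, ⟨∅⟩⟩

lemma sectionGraph_dist (hψ : IsSection ψ) (X : Finset (Fin n)) :
    (sectionGraph ψ).dist X ∅ = X.card := by
  obtain ⟨p, hp⟩ := sectionGraph_exists_walk hψ X
  obtain ⟨q, hq⟩ := ((sectionGraph_connected hψ) X ∅).exists_walk_length_eq_dist
  have hlow := card_le_length_add_card (sectionGraph_le_cube hψ) q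
  have hup := SimpleGraph.dist_le p
  rw [Finset.card_empty, add_zero] at hlow
  omega

lemma sectionGraph_edge_injOn (hψ : IsSection ψ) :
    Set.InjOn (fun X => s(X, X.erase (ψ X))) {X : Finset (Fin n) | X.Nonempty} := by
  intro X hX Y hY h
  simp only [Sym2.eq_iff] at h
  rcases h with ⟨h, -⟩ | ⟨h1, h2⟩
  · exact h
  · have c1 := congrArg Finset.card h1
    have c2 := congrArg Finset.card h2
    rw [Finset.card_erase_of_mem (hψ Y hY)] at c1
    rw [Finset.card_erase_of_mem (hψ X hX)] at c2
    have := hX.card_pos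
    omega

lemma sectionGraph_edgeSet (hψ : IsSection ψ) :
    (sectionGraph ψ).edgeSet = (fun X => s(X, X.erase (ψ X))) '' {X | X.Nonempty} := by
  rw [sectionGraph, edgeSet_fromEdgeSet, sdiff_eq_left, Set.disjoint_left]
  rintro _ ⟨X, hX, rfl⟩ hdiag
  exact Finset.notMem_erase (ψ X) X (Sym2.mk_isDiag_iff.mp hdiag ▸ hψ X hX)

lemma ncard_setOf_nonempty_add_one {α : Type*} [Finite α] :
    {X : Finset α | X.Nonempty}.ncard + 1 = Nat.card (Finset α) := by
  have : {X : Finset α | X.Nonempty} = {∅}ᶜ := by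
    ext X
    simp [Finset.nonempty_iff_ne_empty]
  rw [this, ← Set.ncard_singleton (∅ : Finset α), Set.ncard_compl_add_ncard]

lemma sectionGraph_isTree (hψ : IsSection ψ) : (sectionGraph ψ).IsTree := by
  rw [isTree_iff_connected_and_card, Nat.card_coe_set_eq, sectionGraph_edgeSet hψ,
    (sectionGraph_edge_injOn hψ).ncard_image]
  exact ⟨sectionGraph_connected hψ, ncard_setOf_nonempty_add_one⟩

lemma dirCount_sectionGraph (hψ : IsSection ψ) (i : Fin n) :
    dirCount (sectionGraph ψ) i = secCount ψ i := by
  have : {e | e ∈ (sectionGraph ψ).edgeSet ∧ edgeInDir i e} =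
      (fun X => s(X, X.erase (ψ X))) '' {X | X.Nonempty ∧ ψ X = i} := by
    ext e
    simp only [sectionGraph_edgeSet hψ, Set.mem_ofPred_eq, Set.mem_image]
    constructor
    · rintro ⟨⟨X, hX, rfl⟩, hdir⟩
      exact ⟨X, ⟨hX, ((edgeInDir_mk_erase_iff (hψ X hX)).mp hdir).symm⟩, rfl⟩
    · rintro ⟨X, ⟨hX, rfl⟩, rfl⟩
      exact ⟨⟨X, hX, rfl⟩, (edgeInDir_mk_erase_iff (hψ X hX)).mpr rfl⟩
  rw [dirCount, this, ((sectionGraph_edge_injOn hψ).mono fun X hX => hX.1).ncard_image,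
    secCount]

end SectionGraph

lemma SimpleGraph.IsTree.eq_of_le {V : Type*} [Finite V] {H G : SimpleGraph V} (hle : H ≤ G)
    (hH : H.IsTree) (hG : G.IsTree) : H = G := by
  rw [isTree_iff_connected_and_card, Nat.card_coe_set_eq] at hH hG
  have hsub : H.edgeSet ⊆ G.edgeSet := edgeSet_subset_edgeSet.mpr hle
  exact edgeSet_injective (Set.eq_of_subset_of_ncard_le hsub (by omega))

section Upright

variable {n : ℕ} {T : SimpleGraph (Finset (Fin n))}

lemma IsUpright.exists_adj_erase (hT : IsSpanningTreeOf T (cube n)) (hU : IsUpright T)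
    {X : Finset (Fin n)} (hX : X.Nonempty) : ∃ i ∈ X, T.Adj X (X.erase i) := by
  obtain ⟨p, hp⟩ := (hT.2.connected X ∅).exists_walk_length_eq_dist
  rw [hU X] at hp
  cases p with
  | nil => exact absurd rfl hX.ne_empty
  | cons hadj q =>
    rename_i Y
    have hY : Y.card ≤ q.length := hU Y ▸ SimpleGraph.dist_le q
    rw [SimpleGraph.Walk.length_cons] at hp
    rcases cube_adj_iff.mp (hT.1 hadj) with ⟨i, ⟨hi, rfl⟩ | ⟨hi, rfl⟩⟩
    · exact ⟨i, hi, hadj⟩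
    · rw [Finset.card_erase_of_mem hi] at hp
      have := Finset.card_pos.mpr ⟨i, hi⟩
      omega

lemma IsUpright.exists_isTreeSection (hn : 0 < n) (hT : IsSpanningTreeOf T (cube n))
    (hU : IsUpright T) : ∃ ψ, IsTreeSection T ψ ∧ ψ ∅ = ⟨0, hn⟩ := by
  choose ψ hψ using fun (X : Finset (Fin n)) (hX : X.Nonempty) => hU.exists_adj_erase hT hX
  refine ⟨fun X => if hX : X.Nonempty then ψ X hX else ⟨0, hn⟩, fun X hX => ?_,
    dif_neg Finset.not_nonempty_empty⟩
  simpa only [dif_pos hX] using hψ X hX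

lemma IsTreeSection.isSection {ψ : Finset (Fin n) → Fin n} (h : IsTreeSection T ψ) :
    IsSection ψ :=
  fun X hX => (h X hX).1

lemma IsTreeSection.eq_sectionGraph {ψ : Finset (Fin n) → Fin n} (h : IsTreeSection T ψ)
    (hT : T.IsTree) : T = sectionGraph ψ := by
  have hψ := h.isSection
  refine (IsTree.eq_of_le (fun X Y hXY => ?_) (sectionGraph_isTree hψ) hT).symm
  rcases (sectionGraph_adj hψ).mp hXY with ⟨hX, rfl⟩ | ⟨hY, rfl⟩
  exacts [(h X hX).2, (h Y hY).2.symm]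

end Upright

/-- The value of a section at `∅` plays no role in `sectionGraph`; pinning it to `0` makes
`sectionGraph` injective on this set. -/
def sectionsWithCounts {n : ℕ} (hn : 0 < n) (a : Fin n → ℕ) :
    Set (Finset (Fin n) → Fin n) :=
  {ψ | IsSection ψ ∧ ψ ∅ = ⟨0, hn⟩ ∧ ∀ i, secCount ψ i = a i}

lemma sectionGraph_injOn {n : ℕ} (hn : 0 < n) (a : Fin n → ℕ) :
    Set.InjOn sectionGraph (sectionsWithCounts hn a) := by
  rintro ψ ⟨hψ, hψ0, -⟩ ψ' ⟨hψ', hψ'0, -⟩ h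
  funext X
  rcases X.eq_empty_or_nonempty with rfl | hX
  · rw [hψ0, hψ'0]
  · have hadj := (sectionGraph_adj_erase_iff hψ (hψ X hX)).mpr rfl
    rwa [h, sectionGraph_adj_erase_iff hψ' (hψ X hX)] at hadj

lemma ncard_upright_eq_ncard_sectionsWithCounts {n : ℕ} (hn : 0 < n) (a : Fin n → ℕ) :
    {T : SimpleGraph (Finset (Fin n)) |
        IsSpanningTreeOf T (cube n) ∧ IsUpright T ∧ HasSig T a}.ncard =
      (sectionsWithCounts hn a).ncard := by
  suffices {T : SimpleGraph (Finset (Fin n)) |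
      IsSpanningTreeOf T (cube n) ∧ IsUpright T ∧ HasSig T a} =
        sectionGraph '' sectionsWithCounts hn a by
    rw [this, (sectionGraph_injOn hn a).ncard_image]
  ext T
  constructor
  · rintro ⟨hT, hU, hsig⟩
    obtain ⟨ψ, hψT, hψ0⟩ := hU.exists_isTreeSection hn hT
    obtain rfl := hψT.eq_sectionGraph hT.2
    have hψ := hψT.isSection
    exact ⟨ψ, ⟨hψ, hψ0, fun i => dirCount_sectionGraph hψ i ▸ hsig i⟩, rfl⟩
  · rintro ⟨ψ, ⟨hψ, -, hcount⟩, rfl⟩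
    exact ⟨⟨sectionGraph_le_cube hψ, sectionGraph_isTree hψ⟩, sectionGraph_dist hψ,
      fun i => (dirCount_sectionGraph hψ i).trans (hcount i)⟩

section Saturation

variable {n : ℕ} {a : Fin n → ℕ}

def initSeg {k : ℕ} (h : k ≤ n) : Finset (Fin n) := Finset.univ.map (Fin.castLEEmb h)

lemma mem_initSeg {k : ℕ} {h : k ≤ n} {i : Fin n} : i ∈ initSeg h ↔ (i : ℕ) < k := by
  simp only [initSeg, Finset.mem_map, Finset.mem_univ, true_and, Fin.castLEEmb_apply]
  exact ⟨fun ⟨j, hj⟩ => hj ▸ j.isLt, fun hi => ⟨⟨i, hi⟩, rfl⟩⟩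

lemma card_initSeg {k : ℕ} (h : k ≤ n) : (initSeg h).card = k := by
  simp [initSeg]

lemma le_max'_of_not_subset_initSeg {k : ℕ} {h : k ≤ n} {X : Finset (Fin n)}
    (hXr : ¬ X ⊆ initSeg h) (hX : X.Nonempty) : k ≤ X.max' hX := by
  obtain ⟨x, hx, hxr⟩ := Finset.not_subset.mp hXr
  exact (not_lt.mp (mt mem_initSeg.mpr hxr)).trans (X.le_max' x hx)

lemma Fin.val_le_val_of_strictMono {k : ℕ} {f : Fin k → Fin n} (hf : StrictMono f)
    (j : Fin k) : (j : ℕ) ≤ f j := by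
  obtain ⟨m, hm⟩ := j
  induction m with
  | zero => exact Nat.zero_le _
  | succ m ih =>
    have hlt : f ⟨m, by omega⟩ < f ⟨m + 1, hm⟩ := hf (Fin.mk_lt_mk.mpr m.lt_succ_self)
    exact (ih (by omega)).trans_lt hlt

lemma sum_initSeg_le_sum (hmono : Monotone a) {k : ℕ} (hk : k ≤ n) {K : Finset (Fin n)}
    (hK : K.card = k) : ∑ i ∈ initSeg hk, a i ≤ ∑ i ∈ K, a i := by
  rw [initSeg, Finset.sum_map, ← K.map_orderEmbOfFin_univ hK, Finset.sum_map]
  exact Finset.sum_le_sum fun j _ =>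
    hmono (Fin.val_le_val_of_strictMono (K.orderEmbOfFin hK).strictMono j)

lemma minSum_eq_sum_initSeg (hmono : Monotone a) {k : ℕ} (hk : k ≤ n) :
    minSum a k = ∑ i ∈ initSeg hk, a i := by
  refine le_antisymm (Nat.sInf_le ⟨_, card_initSeg hk, rfl⟩) ?_
  refine le_csInf ⟨_, _, card_initSeg hk, rfl⟩ ?_
  rintro _ ⟨K, hK, rfl⟩
  exact sum_initSeg_le_sum hmono hk hK

def SaturatedAbove (a : Fin n → ℕ) (r : ℕ) : Prop :=
  ∀ k, r ≤ k → k ≤ n → excess a k = 0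

variable {r : ℕ}

lemma SaturatedAbove.sum_initSeg (hsat : SaturatedAbove a r) (hmono : Monotone a) {k : ℕ}
    (hrk : r ≤ k) (hk : k ≤ n) : ∑ i ∈ initSeg hk, a i = 2 ^ k - 1 := by
  have h := hsat k hrk hk
  rw [excess, minSum_eq_sum_initSeg hmono hk, sub_eq_zero] at h
  zify [Nat.one_le_two_pow]
  exact_mod_cast h

lemma SaturatedAbove.eq_two_pow (hsat : SaturatedAbove a r) (hmono : Monotone a) {i : Fin n}
    (hi : r ≤ i) : a i = 2 ^ (i : ℕ) := by
  have hsucc : initSeg (Nat.succ_le_of_lt i.isLt) = insert i (initSeg i.isLt.le) := by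
    ext j
    simp only [Finset.mem_insert, mem_initSeg, Fin.ext_iff]
    omega
  have h₁ := hsat.sum_initSeg hmono hi i.isLt.le
  have h₂ := hsat.sum_initSeg hmono (hi.trans i.val.le_succ) i.isLt
  rw [hsucc, Finset.sum_insert (by simp [mem_initSeg]), h₁, pow_succ] at h₂
  have := Nat.one_le_two_pow (n := i)
  omega

end Saturation

section Forcing

variable {n : ℕ} {ψ : Finset (Fin n) → Fin n}

lemma IsSection.subset_of_sum_secCount_eq (hψ : IsSection ψ) {D : Finset (Fin n)}
    (hD : ∑ i ∈ D, secCount ψ i = 2 ^ D.card - 1) {X : Finset (Fin n)} (hX : X.Nonempty)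
    (hXD : ψ X ∈ D) : X ⊆ D := by
  classical
  set B := Finset.univ.filter fun X : Finset (Fin n) => X.Nonempty ∧ ψ X ∈ D
  have hA : (D.powerset.erase ∅).card = 2 ^ D.card - 1 := by
    rw [Finset.card_erase_of_mem (Finset.empty_mem_powerset D), Finset.card_powerset]
  have hB : B.card = ∑ i ∈ D, secCount ψ i := by
    rw [Finset.card_eq_sum_card_fiberwise (f := ψ) fun X hX => (Finset.mem_filter.mp hX).2.2]
    refine Finset.sum_congr rfl fun i hi => ?_
    rw [secCount, ← Set.ncard_coe_finset]
    congr 1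
    ext Y
    simp only [Finset.coe_filter, Set.mem_ofPred_eq]
    grind
  have hAB : D.powerset.erase ∅ ⊆ B := fun Y hY => by
    simp only [Finset.mem_erase, Finset.mem_powerset] at hY
    have hY' : Y.Nonempty := Finset.nonempty_iff_ne_empty.mpr hY.1
    exact Finset.mem_filter.mpr ⟨Finset.mem_univ Y, hY', hY.2 (hψ Y hY')⟩
  have hXB : X ∈ B := Finset.mem_filter.mpr ⟨Finset.mem_univ X, hX, hXD⟩
  rw [← Finset.eq_of_subset_of_card_le hAB (by omega)] at hXB
  exact Finset.mem_powerset.mp (Finset.mem_of_mem_erase hXB)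

variable {a : Fin n → ℕ} {r : ℕ}

lemma IsSection.eq_max'_of_saturatedAbove (hψ : IsSection ψ) (hcount : ∀ i, secCount ψ i = a i)
    (hmono : Monotone a) (hsat : SaturatedAbove a r) (hrn : r ≤ n) {X : Finset (Fin n)}
    (hX : X.Nonempty) (hXr : ¬ X ⊆ initSeg hrn) : ψ X = X.max' hX := by
  set m := X.max' hX
  have hrm : r ≤ m := le_max'_of_not_subset_initSeg hXr hX
  have hD : ∑ i ∈ initSeg m.isLt.le, secCount ψ i = 2 ^ (initSeg m.isLt.le).card - 1 := by
    simp only [hcount, card_initSeg]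
    exact hsat.sum_initSeg hmono hrm m.isLt.le
  refine le_antisymm (X.le_max' _ (hψ X hX)) (not_lt.mp fun hlt => ?_)
  have hsub := hψ.subset_of_sum_secCount_eq hD hX (mem_initSeg.mpr hlt)
  exact lt_irrefl (m : ℕ) (mem_initSeg.mp (hsub (X.max'_mem hX)))

end Forcing

section Extension

variable {n r : ℕ} (h : r ≤ n)

noncomputable def extendSection (φ : Finset (Fin r) → Fin r) (X : Finset (Fin n)) : Fin n :=
  if hX : X ⊆ initSeg h then
    Fin.castLE h (φ (X.preimage (Fin.castLEEmb h) (Fin.castLEEmb h).injective.injOn))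
  else X.max' (Finset.nonempty_iff_ne_empty.mpr fun h₀ => hX (h₀ ▸ Finset.empty_subset _))

variable {h} {φ : Finset (Fin r) → Fin r}

lemma extendSection_map (φ : Finset (Fin r) → Fin r) (Y : Finset (Fin r)) :
    extendSection h φ (Y.map (Fin.castLEEmb h)) = Fin.castLE h (φ Y) := by
  have hY : Y.map (Fin.castLEEmb h) ⊆ initSeg h :=
    Finset.map_subset_map.mpr (Finset.subset_univ Y)
  rw [extendSection, dif_pos hY, Finset.preimage_map]

lemma extendSection_of_not_subset {X : Finset (Fin n)} (hXr : ¬ X ⊆ initSeg h)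
    (hX : X.Nonempty) : extendSection h φ X = X.max' hX := by
  rw [extendSection, dif_neg hXr]

lemma IsSection.extendSection (hφ : IsSection φ) : IsSection (extendSection h φ) := by
  intro X hX
  by_cases hXr : X ⊆ initSeg h
  · obtain ⟨Y, -, rfl⟩ := Finset.subset_map_iff.mp hXr
    rw [extendSection_map]
    exact Finset.mem_map_of_mem _ (hφ Y (Finset.map_nonempty.mp hX))
  · rw [extendSection_of_not_subset hXr hX]
    exact X.max'_mem hX

lemma extendSection_injective : Function.Injective (extendSection (n := n) h) := by
  intro φ φ' heq
  funext Y
  have := congrFun heq (Y.map (Fin.castLEEmb h))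
  rwa [extendSection_map, extendSection_map, (Fin.castLE_injective h).eq_iff] at this

lemma secCount_extendSection_castLE (φ : Finset (Fin r) → Fin r) (j : Fin r) :
    secCount (extendSection h φ) (Fin.castLE h j) = secCount φ j := by
  suffices {X : Finset (Fin n) | X.Nonempty ∧ extendSection h φ X = Fin.castLE h j} =
      Finset.map (Fin.castLEEmb h) '' {Y | Y.Nonempty ∧ φ Y = j} by
    rw [secCount, this, Set.ncard_image_of_injective _ (Finset.map_injective _), secCount]
  ext X
  simp only [Set.mem_ofPred_eq, Set.mem_image]
  constructor
  · rintro ⟨hX, hXj⟩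
    by_cases hXr : X ⊆ initSeg h
    · obtain ⟨Y, -, rfl⟩ := Finset.subset_map_iff.mp hXr
      rw [extendSection_map, (Fin.castLE_injective h).eq_iff] at hXj
      exact ⟨Y, ⟨Finset.map_nonempty.mp hX, hXj⟩, rfl⟩
    · have := le_max'_of_not_subset_initSeg hXr hX
      rw [← extendSection_of_not_subset hXr hX, hXj, Fin.val_castLE] at this
      exact absurd j.isLt this.not_gt
  · rintro ⟨Y, ⟨hY, rfl⟩, rfl⟩
    exact ⟨Finset.map_nonempty.mpr hY, extendSection_map φ Y⟩

lemma ncard_setOf_isGreatest (i : Fin n) :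
    {X : Finset (Fin n) | IsGreatest (X : Set (Fin n)) i}.ncard = 2 ^ (i : ℕ) := by
  classical
  have : {X : Finset (Fin n) | IsGreatest (X : Set (Fin n)) i} =
      insert i '' ((Finset.Iio i).powerset : Set (Finset (Fin n))) := by
    ext X
    simp only [IsGreatest, upperBounds, Finset.mem_coe, Set.mem_ofPred_eq, Set.mem_image,
      Finset.coe_powerset, Set.mem_preimage, Set.mem_powerset_iff, Finset.coe_subset]
    constructor
    · rintro ⟨hi, hle⟩
      refine ⟨X.erase i, fun j hj => ?_, Finset.insert_erase hi⟩
      exact Finset.mem_Iio.mpr ((hle (Finset.mem_of_mem_erase hj)).lt_of_ne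
        (Finset.ne_of_mem_erase hj))
    · rintro ⟨W, hW, rfl⟩
      refine ⟨Finset.mem_insert_self i W, fun j hj => ?_⟩
      rcases Finset.mem_insert.mp hj with rfl | hj
      exacts [le_rfl, (Finset.mem_Iio.mp (hW hj)).le]
  rw [this, Set.InjOn.ncard_image, Set.ncard_coe_finset, Finset.card_powerset, Fin.card_Iio]
  intro W hW W' hW' heq
  have hiW : ∀ V ∈ ((Finset.Iio i).powerset : Set (Finset (Fin n))), i ∉ V := fun V hV hi =>
    lt_irrefl i (Finset.mem_Iio.mp (Finset.mem_powerset.mp hV hi))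
  simpa only [Finset.erase_insert (hiW W hW), Finset.erase_insert (hiW W' hW')] using
    congrArg (Finset.erase · i) heq

lemma secCount_extendSection_of_le (φ : Finset (Fin r) → Fin r) {i : Fin n} (hi : r ≤ i) :
    secCount (extendSection h φ) i = 2 ^ (i : ℕ) := by
  rw [secCount, ← ncard_setOf_isGreatest i]
  congr 1
  ext X
  simp only [Set.mem_ofPred_eq]
  constructor
  · rintro ⟨hX, rfl⟩
    by_cases hXr : X ⊆ initSeg h
    · obtain ⟨Y, -, rfl⟩ := Finset.subset_map_iff.mp hXr
      rw [extendSection_map, Fin.val_castLE] at hi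
      exact absurd (φ Y).isLt hi.not_gt
    · rw [extendSection_of_not_subset hXr hX]
      exact Finset.isGreatest_max' X hX
  · intro hiX
    have hX : X.Nonempty := ⟨i, hiX.1⟩
    have hXr : ¬ X ⊆ initSeg h := fun hXr => hi.not_gt (mem_initSeg.mp (hXr hiX.1))
    rw [extendSection_of_not_subset hXr hX]
    exact ⟨hX, (Finset.isGreatest_max' X hX).unique hiX⟩

end Extension

lemma exists_extendSection_eq {n r : ℕ} {a : Fin n → ℕ} (hr : 0 < r) (hrn : r ≤ n)
    (hmono : Monotone a) (hsat : SaturatedAbove a r) {ψ : Finset (Fin n) → Fin n}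
    (hψ : ψ ∈ sectionsWithCounts (hr.trans_le hrn) a) :
    ∃ φ ∈ sectionsWithCounts hr (fun j => a (Fin.castLE hrn j)),
      extendSection hrn φ = ψ := by
  obtain ⟨hψ, hψ0, hcount⟩ := hψ
  have hlt : ∀ Y : Finset (Fin r), (ψ (Y.map (Fin.castLEEmb hrn)) : ℕ) < r := by
    intro Y
    rcases Y.eq_empty_or_nonempty with rfl | hY
    · rw [Finset.map_empty, hψ0]
      exact hr
    · exact mem_initSeg.mp (Finset.map_subset_map.mpr (Finset.subset_univ Y)
        (hψ _ (Finset.map_nonempty.mpr hY)))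
  set φ : Finset (Fin r) → Fin r := fun Y => Fin.castLT _ (hlt Y)
  have hext : extendSection hrn φ = ψ := by
    funext X
    by_cases hXr : X ⊆ initSeg hrn
    · obtain ⟨Y, -, rfl⟩ := Finset.subset_map_iff.mp hXr
      rw [extendSection_map]
      rfl
    · have hX : X.Nonempty := Finset.nonempty_iff_ne_empty.mpr fun h₀ =>
        hXr (h₀ ▸ Finset.empty_subset _)
      rw [extendSection_of_not_subset hXr hX,
        hψ.eq_max'_of_saturatedAbove hcount hmono hsat hrn hX hXr]
  refine ⟨φ, ⟨fun Y hY => ?_, Fin.ext ?_, fun j => ?_⟩, hext⟩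
  · have := hψ (Y.map (Fin.castLEEmb hrn)) (Finset.map_nonempty.mpr hY)
    rw [← hext, extendSection_map] at this
    exact (Finset.mem_map' (Fin.castLEEmb hrn)).mp this
  · simp [φ, hψ0]
  · rw [← secCount_extendSection_castLE, hext, hcount]

lemma sectionsWithCounts_eq_image_extendSection {n r : ℕ} {a : Fin n → ℕ} (hr : 0 < r)
    (hrn : r ≤ n) (hmono : Monotone a) (hsat : SaturatedAbove a r) :
    sectionsWithCounts (hr.trans_le hrn) a =
      extendSection hrn '' sectionsWithCounts hr (fun j => a (Fin.castLE hrn j)) := by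
  ext ψ
  refine ⟨exists_extendSection_eq hr hrn hmono hsat, ?_⟩
  rintro ⟨φ, ⟨hφ, hφ0, hcount⟩, rfl⟩
  refine ⟨hφ.extendSection, ?_, fun i => ?_⟩
  · rw [← Finset.map_empty (Fin.castLEEmb hrn), extendSection_map, hφ0]
    rfl
  · by_cases hi : (i : ℕ) < r
    · rw [show i = Fin.castLE hrn ⟨i, hi⟩ from rfl, secCount_extendSection_castLE, hcount]
    · rw [secCount_extendSection_of_le _ (not_lt.mp hi), hsat.eq_two_pow hmono (not_lt.mp hi)]

theorem stmt4_general (n r : ℕ) (hr1 : 1 ≤ r) (hr : r < n) (a : Fin n → ℕ)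
    (hmono : Monotone a)
    (hsat : ∀ k, r ≤ k → k ≤ n → excess a k = 0) :
    {T : SimpleGraph (Finset (Fin n)) |
        IsSpanningTreeOf T (cube n) ∧ IsUpright T ∧ HasSig T a}.ncard =
      {T : SimpleGraph (Finset (Fin r)) |
        IsSpanningTreeOf T (cube r) ∧ IsUpright T ∧
          HasSig T (fun i => a (Fin.castLE hr.le i))}.ncard := by
  rw [ncard_upright_eq_ncard_sectionsWithCounts (Nat.zero_lt_of_lt hr) a,
    ncard_upright_eq_ncard_sectionsWithCounts hr1,
    sectionsWithCounts_eq_image_extendSection hr1 hr.le hmono hsat,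
    Set.ncard_image_of_injective _ extendSection_injective]

/-- Corollary: counting upright trees of saturated signatures.
If the ordered signature `a` of `Q_n` is saturated above direction `r < n`, then the
number of upright spanning trees of `Q_n` with signature `a` equals the number of
upright spanning trees of `Q_r` with signature `(a_1, ..., a_r)`. -/
theorem stmt4 (n r : ℕ) (hr1 : 1 ≤ r) (hr : r < n) (a : Fin n → ℕ)
    (hsig : IsSignature n a) (hmono : Monotone a)
    (hsat : ∀ k, r ≤ k → k ≤ n → excess a k = 0) :
    {T : SimpleGraph (Finset (Fin n)) |
        IsSpanningTreeOf T (cube n) ∧ IsUpright T ∧ HasSig T a}.ncard =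
      {T : SimpleGraph (Finset (Fin r)) |
        IsSpanningTreeOf T (cube r) ∧ IsUpright T ∧
          HasSig T (fun i => a (Fin.castLE hr.le i))}.ncard :=
  stmt4_general n r hr1 hr a hmono hsat
end
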